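/- arXiv:1407.3761 — 6 statements merged into one kernel-verified Lean document; each statement's English description precedes it below -/
import Mathlib

section
/- Let q = p^r be a prime power, B = F_q[X] with derivation d = d/dX, and M = B^n with the trivial connection ∇(f_1,...,f_n) = (f_1',...,f_n'). If n > q then M admits no cyclic vector. -/
/-!
Over a field of characteristic `p > 0` the `p`-th derivative of every polynomial vanishes, since
it is divisible by `p!`. For the trivial connection on `(𝔽_q[X])ⁿ` this gives `∇^p = 0` with
`p ≤ q < n`, so the `p`-th vector of any would-be cyclic basis `m, ∇m, …, ∇ⁿ⁻¹m` is zero.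
-/

open Polynomial

theorem Function.iterate_pi_map {ι α : Type*} (e : α → α) (k : ℕ) (m : ι → α) :
    (fun f i => e (f i))^[k] m = fun i => e^[k] (m i) := by
  induction k generalizing m with
  | zero => rfl
  | succ k ih => simp only [Function.iterate_succ_apply, ih]

theorem Polynomial.iterate_derivative_char_eq_zero {R : Type*} [Semiring R] (p : ℕ) [CharP R p]
    (hp : p ≠ 0) (f : R[X]) : derivative^[p] f = 0 := by
  rw [iterate_derivative_eq_factorial_smul_sum, nsmul_eq_mul,
    (CharP.cast_eq_zero_iff R[X] p _).2 (Nat.dvd_factorial (Nat.pos_of_ne_zero hp) le_rfl),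
    zero_mul]

theorem FiniteField.ringChar_le_card (K : Type*) [Field K] [Fintype K] :
    ringChar K ≤ Fintype.card K := by
  obtain ⟨k, -, hcard⟩ := FiniteField.card K (ringChar K)
  exact hcard ▸ Nat.le_self_pow k.ne_zero _

theorem Module.Basis.not_forall_eq_iterate_of_iterate_eq_zero {R M : Type*} [Semiring R]
    [Nontrivial R] [AddCommMonoid M] [Module R M] {n k : ℕ} (D : M → M)
    (hD : ∀ m, D^[k] m = 0) (hkn : k < n) (m : M) (b : Basis (Fin n) R M) :
    ¬ ∀ i : Fin n, b i = D^[i] m :=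
  fun hb => b.ne_zero ⟨k, hkn⟩ ((hb _).trans (hD m))

theorem stmt1_general (p r : ℕ) (K : Type) [Field K] [Fintype K]
    (hK : Fintype.card K = p ^ r) (n : ℕ) (hn : p ^ r < n) :
    ¬ ∃ (m : Fin n → Polynomial K)
        (b : Module.Basis (Fin n) (Polynomial K) (Fin n → Polynomial K)),
        ∀ i : Fin n, b i = (fun f j => Polynomial.derivative (f j))^[(i : ℕ)] m := by
  rintro ⟨m, b, hb⟩
  have hnabla (v : Fin n → K[X]) : (fun f j => derivative (f j))^[ringChar K] v = 0 := by
    rw [Function.iterate_pi_map]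
    exact funext fun j =>
      iterate_derivative_char_eq_zero _ (CharP.ringChar_ne_zero_of_finite K) (v j)
  exact b.not_forall_eq_iterate_of_iterate_eq_zero _ hnabla
    ((FiniteField.ringChar_le_card K).trans_lt (hK ▸ hn)) m hb

/-- Over `𝔽_q[X]` with `q = p^r`, the trivial connection (componentwise derivative)
on `(𝔽_q[X])^n` with `n > q` admits no cyclic vector. -/
theorem stmt1 (p r : ℕ) (hp : p.Prime) (K : Type) [Field K] [Fintype K]
    (hK : Fintype.card K = p ^ r) (n : ℕ) (hn : p ^ r < n) :
    ¬ ∃ (m : Fin n → Polynomial K)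
        (b : Module.Basis (Fin n) (Polynomial K) (Fin n → Polynomial K)),
        ∀ i : Fin n, b i = (fun f j => Polynomial.derivative (f j))^[(i : ℕ)] m :=
  stmt1_general p r K hK n hn
end

section
/- Let (B, d) be a commutative ring with derivation extended to B[X] by d(X) = 1, M a differential module of rank n over B with (n−1)! invertible in B, and c_0 = Σ_{j=0}^{n-1} c_{0,j} X^j ∈ M ⊗ B[X] a polynomial of degree ≤ n−1. Writing c_{k,0} for the constant term (coefficient of X^0) of ∇^k(c_0), one has the inversion formula c_{0,j} = (1/j!) Σ_{k=0}^{j} (−1)^{j−k} C(j,k) ∇^{j−k}(c_{k,0}) for j = 0, ..., n−1. In particular, the constant terms of c_0, ∇(c_0), ..., ∇^{n-1}(c_0) uniquely determine c_0. -/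
/-!
Write `∇` on `M[X]` as `F + ∂`, where `F` applies `∇` to each coefficient and `∂ = d/dX`.
These commute, so `∇ᵏ = Σₘ C(k,m) Fᵏ⁻ᵐ ∂ᵐ`, and taking constant terms gives
`c_{k,0} = Σₘ C(k,m) m! ∇ᵏ⁻ᵐ c_{0,m}`. Applying `∇ʲ⁻ᵏ` turns this into a binomial transform
`a_k = Σₘ C(k,m) b_m` with `b_m = m! ∇ʲ⁻ᵐ c_{0,m}`, which binomial inversion undoes; finally
`j!` is a unit because it divides `(n-1)!`.
-/

open Finset

theorem sum_range_neg_one_pow_mul_choose_mul_choose (j m : ℕ) :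
    ∑ k ∈ range (j + 1), (-1 : ℤ) ^ (j - k) * j.choose k * k.choose m =
      if m = j then 1 else 0 := by
  rcases lt_or_ge j m with hjm | hmj
  · rw [if_neg hjm.ne']
    refine sum_eq_zero fun k hk => ?_
    rw [Nat.choose_eq_zero_of_lt (n := k) (by grind), Nat.cast_zero, mul_zero]
  obtain ⟨N, rfl⟩ := Nat.exists_eq_add_of_le hmj
  have below : ∑ k ∈ range m, (-1 : ℤ) ^ (m + N - k) * (m + N).choose k * k.choose m = 0 :=
    sum_eq_zero fun k hk => by simp [Nat.choose_eq_zero_of_lt (mem_range.1 hk)]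
  have above : ∀ t ∈ range (N + 1),
      (-1 : ℤ) ^ (m + N - (m + t)) * (m + N).choose (m + t) * (m + t).choose m =
        (m + N).choose m * (1 ^ t * (-1) ^ (N - t) * N.choose t) := by
    intro t _
    have h := Nat.choose_mul (n := m + N) (Nat.le_add_right m t)
    rw [Nat.add_sub_cancel_left, Nat.add_sub_cancel_left] at h
    rw [Nat.add_sub_add_left, mul_assoc, ← Nat.cast_mul, h]
    push_cast
    ring
  -- the remaining sum is the binomial expansion of `(1 + (-1)) ^ N`
  rw [add_assoc, sum_range_add, below, zero_add, sum_congr rfl above, ← mul_sum, ← add_pow,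
    add_neg_cancel, zero_pow_eq]
  by_cases hN : N = 0 <;> simp [hN]

theorem binomial_inversion {M : Type*} [AddCommGroup M] {a b : ℕ → M} {j : ℕ}
    (h : ∀ k ≤ j, a k = ∑ m ∈ range (k + 1), k.choose m • b m) :
    ∑ k ∈ range (j + 1), ((-1 : ℤ) ^ (j - k) * j.choose k) • a k = b j := by
  have extend : ∀ k ∈ range (j + 1), a k = ∑ m ∈ range (j + 1), k.choose m • b m := by
    intro k hk
    rw [h k (Nat.lt_succ_iff.1 (mem_range.1 hk))]
    refine sum_subset (range_subset_range.2 (by grind)) fun m _ hm => ?_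
    rw [Nat.choose_eq_zero_of_lt (by grind), zero_smul]
  calc ∑ k ∈ range (j + 1), ((-1 : ℤ) ^ (j - k) * j.choose k) • a k
      = ∑ m ∈ range (j + 1),
          (∑ k ∈ range (j + 1), (-1 : ℤ) ^ (j - k) * j.choose k * k.choose m) • b m := by
        rw [sum_congr rfl fun k hk => congrArg _ (extend k hk)]
        simp only [smul_sum, sum_smul, mul_smul, natCast_zsmul]
        exact sum_comm
    _ = b j := by
        simp only [sum_range_neg_one_pow_mul_choose_mul_choose, ite_smul, one_smul, zero_smul,
          sum_ite_eq', mem_range, lt_add_one, if_true]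

theorem AddMonoid.End.finsetSum_apply {N ι : Type*} [AddCommMonoid N] (s : Finset ι)
    (g : ι → AddMonoid.End N) (x : N) : (∑ i ∈ s, g i) x = ∑ i ∈ s, g i x :=
  AddMonoidHom.finsetSum_apply _ _ _

section CoeffSeq

/- A sequence `c : ℕ → M` stands for the coefficients of `Σ c j • X ^ j`; on such sequences the
connection `∇ ⊗ 1 + 1 ⊗ d/dX` is `coeffMap ∇ + coeffDerivative`. -/

variable {M : Type*} [AddCommMonoid M]

def coeffDerivative : AddMonoid.End (ℕ → M) where
  toFun c j := (j + 1) • c (j + 1)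
  map_zero' := by ext; simp
  map_add' c c' := by ext; simp [smul_add]

def coeffMap (f : AddMonoid.End M) : AddMonoid.End (ℕ → M) := AddMonoidHom.compLeft f ℕ

def coeffConnection (f : AddMonoid.End M) : AddMonoid.End (ℕ → M) :=
  coeffDerivative + coeffMap f

theorem coeffDerivative_pow_apply (m : ℕ) (c : ℕ → M) (q : ℕ) :
    (coeffDerivative ^ m) c q = (q + m).descFactorial m • c (q + m) := by
  induction m generalizing c with
  | zero => simp
  | succ m ih =>
    rw [pow_succ, AddMonoid.End.coe_mul, Function.comp_apply, ih]
    change _ • ((q + m + 1) • c (q + m + 1)) = _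
    rw [smul_smul, ← add_assoc, Nat.succ_descFactorial_succ, mul_comm]

theorem coeffMap_pow_apply (f : AddMonoid.End M) (a : ℕ) (c : ℕ → M) (q : ℕ) :
    (coeffMap f ^ a) c q = f^[a] (c q) := by
  induction a generalizing c with
  | zero => rfl
  | succ a ih =>
    rw [pow_succ, AddMonoid.End.coe_mul, Function.comp_apply, ih, Function.iterate_succ_apply]
    rfl

theorem commute_coeffDerivative_coeffMap (f : AddMonoid.End M) :
    Commute coeffDerivative (coeffMap f) := by
  ext c q
  exact (map_nsmul f _ _).symm

theorem coeffConnection_pow_apply_zero (f : AddMonoid.End M) (k : ℕ) (c : ℕ → M) :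
    (coeffConnection f ^ k) c 0 =
      ∑ m ∈ range (k + 1), k.choose m • m.factorial • f^[k - m] (c m) := by
  rw [coeffConnection, (commute_coeffDerivative_coeffMap f).add_pow,
    AddMonoid.End.finsetSum_apply, Finset.sum_apply]
  refine sum_congr rfl fun m _ => ?_
  rw [AddMonoid.End.coe_mul, AddMonoid.End.coe_mul]
  simp only [Function.comp_apply, coeffDerivative_pow_apply, coeffMap_pow_apply, zero_add,
    AddMonoid.End.natCast_apply, Pi.smul_apply, map_nsmul, Nat.descFactorial_self]
  exact smul_comm _ _ _

theorem eq_coeffConnection_pow_apply {f : AddMonoid.End M} {c : ℕ → ℕ → M}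
    (hrec : ∀ i j, c (i + 1) j = f (c i j) + (j + 1) • c i (j + 1)) (k : ℕ) :
    c k = (coeffConnection f ^ k) (c 0) := by
  induction k with
  | zero => rfl
  | succ k ih =>
    ext q
    rw [hrec, pow_succ', AddMonoid.End.coe_mul, Function.comp_apply, ← ih, add_comm]
    rfl

end CoeffSeq

theorem factorial_smul_coeff_eq_sum {M : Type*} [AddCommGroup M] {f : AddMonoid.End M}
    {c : ℕ → ℕ → M} (hrec : ∀ i j, c (i + 1) j = f (c i j) + (j + 1) • c i (j + 1)) (j : ℕ) :
    ∑ k ∈ range (j + 1), ((-1 : ℤ) ^ (j - k) * j.choose k) • f^[j - k] (c k 0) =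
      j.factorial • c 0 j := by
  have inversion := binomial_inversion (j := j)
    (a := fun k => f^[j - k] (c k 0)) (b := fun m => m.factorial • f^[j - m] (c 0 m))
  rw [inversion, Nat.sub_self, Function.iterate_zero_apply]
  intro k hk
  rw [eq_coeffConnection_pow_apply hrec, coeffConnection_pow_apply_zero, ← AddMonoid.End.coe_pow,
    map_sum]
  refine sum_congr rfl fun m hm => ?_
  have hmk : m ≤ k := Nat.lt_succ_iff.1 (mem_range.1 hm)
  rw [map_nsmul, map_nsmul, AddMonoid.End.coe_pow, ← Function.iterate_add_apply,
    show j - k + (k - m) = j - m by omega]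

theorem stmt6_general (B M : Type) [CommRing B] [AddCommGroup M] [Module B M]
    (n : ℕ) (hinv : IsUnit ((Nat.factorial (n - 1) : B)))
    (nab : M → M) (hadd : ∀ x y, nab (x + y) = nab x + nab y)
    (c : ℕ → ℕ → M)
    (hrec : ∀ i j, c (i + 1) j = nab (c i j) + (j + 1) • c i (j + 1))
    (j : ℕ) (hj : j < n) :
    c 0 j = Ring.inverse ((Nat.factorial j : B)) •
      ∑ k ∈ Finset.range (j + 1),
        ((-1 : ℤ) ^ (j - k) * (j.choose k : ℤ)) • nab^[j - k] (c k 0) := by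
  have hunit : IsUnit (j.factorial : B) :=
    isUnit_of_dvd_unit (Nat.cast_dvd_cast (Nat.factorial_dvd_factorial (by omega))) hinv
  calc c 0 j = Ring.inverse (j.factorial : B) • j.factorial • c 0 j := by
        rw [← Nat.cast_smul_eq_nsmul B, smul_smul, Ring.inverse_mul_cancel _ hunit, one_smul]
    _ = _ := congrArg _ (factorial_smul_coeff_eq_sum (f := AddMonoidHom.mk' nab hadd) hrec j).symm

/-- Inversion formula: if `c₀ = Σ_{j<n} c_{0,j} X^j` has degree `≤ n−1` and `c_{k,0}`
denotes the constant term of `∇^k(c₀)` (coefficients encoded by the recursion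
`c_{i+1,j} = ∇(c_{i,j}) + (j+1)·c_{i,j+1}`), then for `j < n`,
`c_{0,j} = (1/j!) Σ_{k=0}^{j} (−1)^{j−k} C(j,k) ∇^{j−k}(c_{k,0})`. -/
theorem stmt6 (B M : Type) [CommRing B] [AddCommGroup M] [Module B M]
    (n : ℕ) (hinv : IsUnit ((Nat.factorial (n - 1) : B)))
    (d : B → B)
    (hd_add : ∀ x y, d (x + y) = d x + d y)
    (hd_mul : ∀ x y, d (x * y) = x * d y + d x * y)
    (nab : M → M) (hadd : ∀ x y, nab (x + y) = nab x + nab y)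
    (hL : ∀ (b : B) (m : M), nab (b • m) = d b • m + b • nab m)
    (c : ℕ → ℕ → M)
    (hrec : ∀ i j, c (i + 1) j = nab (c i j) + (j + 1) • c i (j + 1))
    (hdeg : ∀ j, n ≤ j → c 0 j = 0)
    (j : ℕ) (hj : j < n) :
    c 0 j = Ring.inverse ((Nat.factorial j : B)) •
      ∑ k ∈ Finset.range (j + 1),
        ((-1 : ℤ) ^ (j - k) * (j.choose k : ℤ)) • nab^[j - k] (c k 0) :=
  stmt6_general B M n hinv nab hadd c hrec j hj
end

section
/- Let (B, d) be a commutative ring with derivation, t ∈ B with d(t) = 1, M a rank-n differential module with basis e_0, ..., e_{n-1}, and (n−1)! invertible in B. Define the Katz vector c(e, X) = Σ_{j=0}^{n-1} (X^j / j!) Σ_{k=0}^{j} (−1)^k C(j,k) ∇^k(e_{j−k}) in M ⊗ B[X]. Then the matrix H(X) expressing {c, ∇c, ..., ∇^{n-1}c} in the basis e satisfies H(0) = Id. Consequently det H(X) is a polynomial P(X) ∈ B[X] with P(0) = 1. -/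
/-!
Write `c i j` for the coefficient of `X ^ j` in `∇ⁱ c(e, X)`, so that `∇` on `M ⊗ B[X]` gives
`c (i+1) j = ∇ (c i j) + (j+1) c i (j+1)`. Multiplying by `j!` clears all denominators (the
additive `∇` commutes with integer multiples), and the result is, by Pascal's rule, the
recursion satisfied by the sums `K i j = ∑_{k+l=j} (-1)^k C(j,k) ∇^k e_{i+l}`, which agree with
`j! c 0 j` for `i = 0`. Hence `j! c i j = K i j` whenever `i + j < n`, and at `j = 0` this reads
`c i 0 = e_i`: the rows of `H(0)` are the basis vectors.
-/

open Finset

section KatzSum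

variable {M : Type*} [AddCommGroup M] (N : M →+ M) (f : ℕ → M)

def katzSum (i j : ℕ) : M :=
  ∑ p ∈ antidiagonal j, j.choose p.1 • ((-1 : ℤ) ^ p.1 • N^[p.1] (f (i + p.2)))

theorem katzSum_zero_right (i : ℕ) : katzSum N f i 0 = f i := by
  simp [katzSum]

theorem katzSum_eq_sum_range (i j : ℕ) :
    katzSum N f i j =
      ∑ k ∈ range (j + 1), ((-1 : ℤ) ^ k * (j.choose k : ℤ)) • N^[k] (f (i + (j - k))) := by
  rw [katzSum, Nat.sum_antidiagonal_eq_sum_range_succ_mk]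
  refine sum_congr rfl fun k _ => ?_
  rw [mul_comm, mul_smul, natCast_zsmul]

theorem map_katzSum_add_katzSum_succ (i j : ℕ) :
    N (katzSum N f i j) + katzSum N f i (j + 1) = katzSum N f (i + 1) j := by
  let g : ℕ → ℕ → M := fun k l => (-1 : ℤ) ^ k • N^[k] (f (i + l))
  have hlower : ∑ p ∈ antidiagonal j, j.choose p.2 • g (p.1 + 1) p.2 = -N (katzSum N f i j) := by
    rw [katzSum, map_sum, ← sum_neg_distrib]
    refine sum_congr rfl fun p hp => ?_
    rw [Nat.choose_symm_of_eq_add (mem_antidiagonal.mp hp).symm, map_nsmul, ← smul_neg, map_zsmul,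
      ← neg_smul, ← Function.iterate_succ_apply' N, ← mul_neg_one, ← pow_succ]
  rw [show katzSum N f i (j + 1) = _ from sum_antidiagonal_choose_succ_nsmul g j, hlower,
    add_neg_cancel_comm_assoc]
  simp only [g, katzSum, add_assoc, add_comm 1]

theorem factorial_smul_eq_katzSum (c : ℕ → ℕ → M) (n : ℕ)
    (hrec : ∀ i j, c (i + 1) j = N (c i j) + (j + 1) • c i (j + 1))
    (h0 : ∀ j < n, j.factorial • c 0 j = katzSum N f 0 j) :
    ∀ i j, i + j < n → j.factorial • c i j = katzSum N f i j := by
  intro i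
  induction i with
  | zero => exact fun j hj => h0 j (by omega)
  | succ i ih =>
    intro j hj
    have hfac : j.factorial • (j + 1) • c i (j + 1) = (j + 1).factorial • c i (j + 1) := by
      rw [← mul_smul, Nat.factorial_succ, mul_comm]
    rw [hrec, smul_add, ← map_nsmul, hfac, ih j (by omega), ih (j + 1) (by omega),
      map_katzSum_add_katzSum_succ]

end KatzSum

/-- For the Katz vector `c(e,X) = Σ_{j<n} (X^j/j!) Σ_{k≤j} (−1)^k C(j,k) ∇^k(e_{j−k})`
(coefficients `c 0 j`, with rows `c i` the coefficients of `∇^i(c(e,X))` via the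
recursion), the base change matrix at `X = 0` is the identity; in particular
`P(0) = det H(0) = 1`. -/
theorem stmt7 (B M : Type) [CommRing B] [AddCommGroup M] [Module B M]
    (n : ℕ) (e : Module.Basis (Fin n) B M) (hinv : IsUnit ((Nat.factorial (n - 1) : B)))
    (nab : M → M) (hadd : ∀ x y, nab (x + y) = nab x + nab y)
    (c : ℕ → ℕ → M)
    (hrec : ∀ i j, c (i + 1) j = nab (c i j) + (j + 1) • c i (j + 1))
    (hc0 : ∀ j, c 0 j =
      if hj : j < n then
        Ring.inverse ((Nat.factorial j : B)) •
          ∑ k ∈ (Finset.range (j + 1)).attach,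
            ((-1 : ℤ) ^ (k : ℕ) * (j.choose k : ℤ)) •
              nab^[(k : ℕ)] (e ⟨j - (k : ℕ), by
                have hk := Finset.mem_range.mp k.2; omega⟩)
      else 0) :
    (Matrix.of fun i j : Fin n => e.repr (c (i : ℕ) 0) j) = 1 ∧
    (Matrix.of fun i j : Fin n => e.repr (c (i : ℕ) 0) j).det = 1 := by
  let N : M →+ M := AddMonoidHom.mk' nab hadd
  let f : ℕ → M := fun l => if h : l < n then e ⟨l, h⟩ else 0
  have h0 : ∀ j < n, j.factorial • c 0 j = katzSum N f 0 j := fun j hj => by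
    have hunit : IsUnit (j.factorial : B) :=
      isUnit_of_dvd_unit (Nat.cast_dvd_cast (Nat.factorial_dvd_factorial (by omega))) hinv
    rw [hc0, dif_pos hj, ← Nat.cast_smul_eq_nsmul B, smul_smul, Ring.mul_inverse_cancel _ hunit,
      one_smul, katzSum_eq_sum_range]
    refine Eq.trans ?_ (sum_attach _ _)
    refine sum_congr rfl fun k _ => ?_
    have hk := mem_range.mp k.2
    simp only [f, zero_add, dif_pos (show j - k < n by omega)]
    rfl
  have hc : ∀ i : Fin n, c i 0 = e i := fun i => by
    simpa [katzSum_zero_right, f] using factorial_smul_eq_katzSum N f c n hrec h0 i 0 (by simp)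
  have hH : (Matrix.of fun i j : Fin n => e.repr (c (i : ℕ) 0) j) = 1 := by
    ext i j
    rw [Matrix.of_apply, hc, Module.Basis.repr_self, Matrix.one_apply, Finsupp.single_apply]
  exact ⟨hH, by rw [hH, Matrix.det_one]⟩
end

section
/- Let B be a local ring in which (n−1)! is invertible, d a derivation on B, t ∈ B with d(t) = 1, and a ∈ B a constant (d(a) = 0) such that t − a lies in the maximal ideal of B. Then for any rank-n differential module (M, ∇) with basis e, the Katz vector c(e, t−a) = Σ_{j=0}^{n-1} ((t−a)^j / j!) Σ_{k=0}^{j} (−1)^k C(j,k) ∇^k(e_{j−k}) is a cyclic vector for M. -/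
/-!
Put `u = t - a`, `w j = u ^ j / j!` and `c j = ∑ₖ (-1) ^ k C(j,k) • ∇^[k] (e (j - k))`, so that the
Katz vector is `∑ⱼ w j • c j`. Since `d u = 1`, `d^[s] (w j)` is `w (j - s)` for `s ≤ j` and `0`
otherwise, so modulo the maximal ideal `𝔪` only `d^[j] (w j) = 1` survives. By the Leibniz rule,
`∇^[i] (∑ⱼ w j • c j)` is therefore congruent modulo `𝔪 M` to `∑ⱼ C(i,j) • ∇^[i-j] (c j)`, which is
`e i` because `j ↦ c j` is the binomial transform of `e` by `-∇` and the binomial transform by `∇`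
inverts it. So the matrix of these vectors in the basis `e` is the identity modulo `𝔪`, and its
determinant is a unit.
-/

open Finset IsLocalRing
open scoped Nat

section BinomialTransform

variable {M : Type*} [AddCommGroup M]

/-- The coefficient of `X ^ i / i!` in `exp (f X) * ∑ₗ E l X ^ l / l!`. -/
def binomialTransform (f : AddMonoid.End M) (E : ℕ → M) (i : ℕ) : M :=
  ∑ x ∈ antidiagonal i, i.choose x.1 • (f ^ x.1) (E x.2)

@[simp]
lemma AddMonoid.End.neg_apply (f : AddMonoid.End M) (x : M) : (-f) x = -f x := rfl

variable (f : AddMonoid.End M) (E : ℕ → M)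

@[simp]
lemma binomialTransform_zero : binomialTransform f E 0 = E 0 := by
  simp [binomialTransform]

lemma binomialTransform_succ (i : ℕ) :
    binomialTransform f E (i + 1) =
      binomialTransform f (fun l ↦ E (l + 1)) i + f (binomialTransform f E i) := by
  rw [binomialTransform, Finset.sum_antidiagonal_choose_succ_nsmul (fun p q ↦ (f ^ p) (E q))]
  simp only [binomialTransform, map_sum, map_nsmul, pow_succ', AddMonoid.End.coe_mul,
    Function.comp_apply]
  congr 1
  refine sum_congr rfl fun x hx ↦ ?_
  rw [i.choose_symm_of_eq_add (mem_antidiagonal.1 hx).symm]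

lemma map_binomialTransform (i : ℕ) :
    f (binomialTransform f E i) = binomialTransform f (fun l ↦ f (E l)) i := by
  simp only [binomialTransform, map_sum, map_nsmul]
  congr! 2 with x
  exact congrArg (· (E x.2)) (Commute.self_pow f x.1).eq

lemma binomialTransform_add (E' : ℕ → M) (i : ℕ) :
    binomialTransform f (fun l ↦ E l + E' l) i =
      binomialTransform f E i + binomialTransform f E' i := by
  simp only [binomialTransform, map_add, smul_add, sum_add_distrib]

theorem binomialTransform_binomialTransform_neg (i : ℕ) :
    binomialTransform f (binomialTransform (-f) E) i = E i := by
  induction i generalizing E with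
  | zero => simp
  | succ i ih =>
    have shift (l : ℕ) : binomialTransform (-f) E (l + 1) + f (binomialTransform (-f) E l) =
        binomialTransform (-f) (fun l ↦ E (l + 1)) l := by
      rw [binomialTransform_succ, AddMonoid.End.neg_apply, neg_add_cancel_right]
    rw [binomialTransform_succ, map_binomialTransform, ← binomialTransform_add]
    simp only [shift]
    exact ih _

lemma AddMonoid.End.neg_pow_apply (k : ℕ) (x : M) :
    ((-f) ^ k) x = (-1 : ℤ) ^ k • (f ^ k) x := by
  induction k with
  | zero => simp
  | succ k ih => simp only [pow_succ', AddMonoid.End.coe_mul, Function.comp_apply, ih,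
      AddMonoid.End.neg_apply, map_zsmul, mul_smul, neg_one_smul, smul_neg]

end BinomialTransform

section Leibniz

variable {B M : Type*} [CommRing B] [AddCommGroup M] [Module B M]

theorem AddMonoid.End.pow_apply_smul_of_leibniz (δ : B → B) (N : AddMonoid.End M)
    (hN : ∀ (b : B) (m : M), N (b • m) = δ b • m + b • N m) (i : ℕ) (b : B) (m : M) :
    (N ^ i) (b • m) = ∑ x ∈ antidiagonal i, i.choose x.1 • (δ^[x.1] b • (N ^ x.2) m) := by
  induction i with
  | zero => simp
  | succ i ih =>
    rw [sum_antidiagonal_choose_succ_nsmul (fun p q ↦ δ^[p] b • (N ^ q) m), pow_succ',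
      AddMonoid.End.coe_mul, Function.comp_apply, ih]
    simp only [map_sum, map_nsmul, hN, smul_add, sum_add_distrib, Function.iterate_succ_apply',
      pow_succ', AddMonoid.End.coe_mul, Function.comp_apply]
    rw [add_comm]
    congr 1
    refine sum_congr rfl fun x hx ↦ ?_
    rw [i.choose_symm_of_eq_add (mem_antidiagonal.1 hx).symm]

end Leibniz

section Coefficients

variable {B : Type*} [CommRing B]

def Derivation.ofLeibniz (d : B → B) (hadd : ∀ x y, d (x + y) = d x + d y)
    (hmul : ∀ x y, d (x * y) = x * d y + d x * y) : Derivation ℤ B B :=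
  Derivation.mk' (AddMonoidHom.mk' d hadd).toIntLinearMap fun x y ↦ by
    simp [hmul, smul_eq_mul, mul_comm]

noncomputable def powDivFactorial (u : B) (j : ℕ) : B :=
  u ^ j * Ring.inverse (j ! : B)

lemma Derivation.map_powDivFactorial_succ (D : Derivation ℤ B B) {u : B} (hu : D u = 1) {j : ℕ}
    (hj : IsUnit ((j + 1)! : B)) : D (powDivFactorial u (j + 1)) = powDivFactorial u j := by
  have hinv : D (Ring.inverse ((j + 1)! : B)) = 0 := by
    rw [D.leibniz_of_mul_eq_one (Ring.inverse_mul_cancel _ hj), D.map_natCast, smul_zero]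
  rw [Nat.factorial_succ, Nat.cast_mul] at hj
  obtain ⟨⟨U, hU⟩, ⟨V, hV⟩⟩ := IsUnit.mul_iff.1 hj
  have hfac : ((j + 1)! : B) = ↑(U * V) := by
    rw [Units.val_mul, hU, hV, Nat.factorial_succ, Nat.cast_mul]
  rw [powDivFactorial, powDivFactorial, D.leibniz, hinv, smul_zero, zero_add, D.leibniz_pow, hu,
    hfac, ← hV, Ring.inverse_unit, Ring.inverse_unit, add_tsub_cancel_right, smul_eq_mul,
    nsmul_eq_mul, smul_eq_mul, mul_one, ← hU, mul_inv_rev, Units.val_mul, mul_assoc,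
    Units.inv_mul_cancel_left, mul_comm]

lemma Function.iterate_apply_eq_ite {α : Type*} [Zero α] {f : α → α} (hf : f 0 = 0)
    {w : ℕ → α} {n : ℕ} (hw : ∀ j, j + 1 < n → f (w (j + 1)) = w j) (h0 : f (w 0) = 0)
    {j : ℕ} (hj : j < n) (s : ℕ) : f^[s] (w j) = if s ≤ j then w (j - s) else 0 := by
  induction s with
  | zero => simp
  | succ s ih =>
    rw [Function.iterate_succ_apply', ih]
    rcases lt_trichotomy s j with h | rfl | h
    · rw [if_pos h.le, if_pos (Nat.succ_le_of_lt h), ← hw (j - (s + 1)) (by omega)]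
      congr 2
      omega
    · rw [if_pos le_rfl, if_neg (by omega), Nat.sub_self, h0]
    · rw [if_neg (by omega), if_neg (by omega), hf]

lemma Derivation.iterate_powDivFactorial_sub_mem (D : Derivation ℤ B B) {u : B} (hu : D u = 1)
    {I : Ideal B} (huI : u ∈ I) {n : ℕ} (hfact : ∀ j < n, IsUnit (j ! : B)) {j : ℕ} (hj : j < n)
    (s : ℕ) : D^[s] (powDivFactorial u j) - (if s = j then 1 else 0) ∈ I := by
  have h0 : powDivFactorial u 0 = 1 := by simp [powDivFactorial]
  rw [Function.iterate_apply_eq_ite D.map_zero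
    (fun j hj ↦ D.map_powDivFactorial_succ hu (hfact _ hj)) (by rw [h0, D.map_one_eq_zero]) hj]
  rcases lt_trichotomy s j with h | rfl | h
  · rw [if_pos h.le, if_neg h.ne, sub_zero, powDivFactorial]
    exact I.mul_mem_right _ (I.pow_mem_of_mem huI _ (by omega))
  · simp [h0]
  · simp [h.not_ge, h.ne']

end Coefficients

section Basis

variable {B M ι : Type*} [CommRing B] [AddCommGroup M] [Module B M]

lemma Module.Basis.repr_mem_of_mem_smul_top (e : Module.Basis ι B M) {I : Ideal B} {x : M}
    (hx : x ∈ I • (⊤ : Submodule B M)) (i : ι) : e.repr x i ∈ I := by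
  refine Submodule.smul_induction_on hx (fun r hr y _ ↦ ?_) fun y z hy hz ↦ ?_
  · simpa using I.mul_mem_right _ hr
  · simpa using I.add_mem hy hz

lemma Module.Basis.exists_basis_of_sub_mem_maximalIdeal_smul [IsLocalRing B] [Fintype ι]
    [DecidableEq ι] (e : Module.Basis ι B M) (v : ι → M)
    (hv : ∀ i, v i - e i ∈ maximalIdeal B • (⊤ : Submodule B M)) :
    ∃ b : Module.Basis ι B M, ⇑b = v := by
  have hred : (e.toMatrix v).map (residue B) = 1 := by
    ext i j
    have := (residue_eq_zero_iff _).2 (e.repr_mem_of_mem_smul_top (hv j) i)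
    rw [map_sub, Finsupp.sub_apply, map_sub, sub_eq_zero, e.repr_self, Finsupp.single_apply]
      at this
    simp [Module.Basis.toMatrix_apply, this, Matrix.one_apply, eq_comm, apply_ite (residue B)]
  have hdet : IsUnit (e.det v) := by
    refine isUnit_of_map_unit (residue B) _ ?_
    rw [e.det_apply, RingHom.map_det, RingHom.mapMatrix_apply, hred, Matrix.det_one]
    exact isUnit_one
  obtain ⟨hli, hsp⟩ := e.is_basis_iff_det.2 hdet
  exact ⟨Module.Basis.mk hli hsp.ge, Module.Basis.coe_mk _ _⟩

end Basis

section Katz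

variable {B M : Type*} [CommRing B] [AddCommGroup M] [Module B M]

noncomputable def katzVector (N : AddMonoid.End M) (E : ℕ → M) (u : B) (n : ℕ) : M :=
  ∑ j ∈ range n, powDivFactorial u j • binomialTransform (-N) E j

theorem pow_katzVector_sub_mem (D : Derivation ℤ B B) (N : AddMonoid.End M)
    (hN : ∀ (b : B) (m : M), N (b • m) = D b • m + b • N m) {u : B} (hu : D u = 1)
    {I : Ideal B} (huI : u ∈ I) {n : ℕ} (hfact : ∀ j < n, IsUnit (j ! : B)) (E : ℕ → M)
    {i : ℕ} (hi : i < n) :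
    (N ^ i) (katzVector N E u n) - E i ∈ I • (⊤ : Submodule B M) := by
  set c := binomialTransform (-N) E
  have hsurviving : ∑ j ∈ range n, ∑ x ∈ antidiagonal i,
      i.choose x.1 • ((if x.1 = j then 1 else 0 : B) • (N ^ x.2) (c j)) = E i := by
    rw [sum_comm]
    simp only [ite_smul, one_smul, zero_smul, smul_ite, smul_zero, sum_ite_eq]
    conv_rhs => rw [← binomialTransform_binomialTransform_neg N E i, binomialTransform,
      ← Nat.sum_antidiagonal_swap]
    refine sum_congr rfl fun x hx ↦ ?_
    rw [HasAntidiagonal.mem_antidiagonal] at hx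
    rw [if_pos (mem_range.2 (by omega)), Prod.fst_swap, Prod.snd_swap,
      i.choose_symm_of_eq_add hx.symm]
  rw [katzVector, map_sum, ← hsurviving, ← sum_sub_distrib]
  refine sum_mem fun j hj ↦ ?_
  rw [AddMonoid.End.pow_apply_smul_of_leibniz D N hN, ← sum_sub_distrib]
  refine sum_mem fun x _ ↦ ?_
  rw [← smul_sub, ← sub_smul]
  exact Submodule.smul_of_tower_mem _ _ (Submodule.smul_mem_smul
    (D.iterate_powDivFactorial_sub_mem hu huI hfact (mem_range.1 hj) _) trivial)

lemma katzVector_basis_eq {n : ℕ} (e : Module.Basis (Fin n) B M) (N : AddMonoid.End M) (u : B) :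
    katzVector N (fun l ↦ if h : l < n then e ⟨l, h⟩ else 0) u n =
      ∑ j : Fin n, (u ^ (j : ℕ) * Ring.inverse ((j ! : ℕ) : B)) •
        ∑ k ∈ (range ((j : ℕ) + 1)).attach, ((-1 : ℤ) ^ (k : ℕ) * ((j : ℕ).choose k : ℤ)) •
          (⇑N)^[(k : ℕ)] (e ⟨(j : ℕ) - (k : ℕ), (Nat.sub_le _ _).trans_lt j.isLt⟩) := by
  rw [katzVector, ← Fin.sum_univ_eq_sum_range]
  refine sum_congr rfl fun j _ ↦ ?_
  rw [powDivFactorial, binomialTransform, Nat.sum_antidiagonal_eq_sum_range_succ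
    (fun p q ↦ (j : ℕ).choose p • ((-N) ^ p) (if h : q < n then e ⟨q, h⟩ else 0)), ← sum_attach]
  refine congrArg _ (sum_congr rfl fun k _ ↦ ?_)
  rw [dif_pos (by omega), AddMonoid.End.neg_pow_apply, AddMonoid.End.coe_pow, mul_comm, mul_smul,
    natCast_zsmul]

end Katz

/-- Katz's theorem over a local ring: if `(n−1)!` is invertible, `d(t) = 1`, `d(a) = 0`
and `t − a` lies in the maximal ideal, then the Katz vector `c(e, t−a)` is a cyclic
vector for any rank-`n` differential module `(M, ∇)` with basis `e`. -/
theorem stmt9 (B M : Type) [CommRing B] [IsLocalRing B] [AddCommGroup M] [Module B M]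
    (n : ℕ) (hinv : IsUnit ((Nat.factorial (n - 1) : B)))
    (d : B → B)
    (hd_add : ∀ x y, d (x + y) = d x + d y)
    (hd_mul : ∀ x y, d (x * y) = x * d y + d x * y)
    (t a : B) (ht : d t = 1) (ha : d a = 0)
    (hta : t - a ∈ IsLocalRing.maximalIdeal B)
    (e : Module.Basis (Fin n) B M)
    (nab : M → M) (hadd : ∀ x y, nab (x + y) = nab x + nab y)
    (hL : ∀ (b : B) (m : M), nab (b • m) = d b • m + b • nab m) :
    ∃ b : Module.Basis (Fin n) B M, ∀ i : Fin n,
      b i = nab^[(i : ℕ)]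
        (∑ j : Fin n, ((t - a) ^ (j : ℕ) * Ring.inverse ((Nat.factorial (j : ℕ) : B))) •
          ∑ k ∈ (Finset.range ((j : ℕ) + 1)).attach,
            ((-1 : ℤ) ^ (k : ℕ) * ((j : ℕ).choose k : ℤ)) •
              nab^[(k : ℕ)] (e ⟨(j : ℕ) - (k : ℕ), by
                have hk := Finset.mem_range.mp k.2; have hj := j.isLt; omega⟩)) := by
  let N : AddMonoid.End M := AddMonoidHom.mk' nab hadd
  let D := Derivation.ofLeibniz d hd_add hd_mul
  have hu : D (t - a) = 1 := by
    rw [D.map_sub]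
    simp [D, Derivation.ofLeibniz, ht, ha]
  have hfact (j : ℕ) (hj : j < n) : IsUnit (j ! : B) := isUnit_of_dvd_unit
    (Nat.cast_dvd_cast (Nat.factorial_dvd_factorial (Nat.le_sub_one_of_lt hj))) hinv
  obtain ⟨b, hb⟩ := e.exists_basis_of_sub_mem_maximalIdeal_smul _ fun i : Fin n ↦ by
    simpa using pow_katzVector_sub_mem D N hL hu hta hfact
      (fun l ↦ if h : l < n then e ⟨l, h⟩ else 0) i.isLt
  exact ⟨b, fun i ↦ by rw [hb, katzVector_basis_eq]; rfl⟩
end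

section
/- Let B be a field of characteristic 0 with a nontrivial derivation d. Then every differential module (M, ∇) over (B, d) of finite rank admits a cyclic vector. -/
/-!
Let `k` be maximal such that some `m` has linearly independent `m, ∇m, …, ∇^(k-1) m`, let `W` be
their span and write `∇^k m = ∑ aᵢ ∇ⁱ m`. By maximality, for every `f` and every `ν ∈ ℕ` the
vectors `∇ⁱ (m + ν f)`, `i ≤ k`, are dependent, so every alternating `(k+1)`-form vanishes on them.
That value is a polynomial in `ν`; its linear coefficient says that
`L f = ∇^k f - ∑ aᵢ ∇ⁱ f` lies in `W` for every `f`. After rescaling `∇` we may take `t` with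
`d t = 1`; then `L (t f) - t L f = L' f`, where `L'` is the formal derivative of `L` as a
polynomial in `∇`. Differentiating `k` times gives `k! f ∈ W`, so `W` is everything and `k = dim M`.
-/

open Function Module Polynomial Finset

theorem MultilinearMap.linearDeriv_eq_zero_of_map_add_natCast_smul {K M ι : Type*} [Field K]
    [CharZero K] [AddCommGroup M] [Module K M] [Fintype ι] [DecidableEq ι]
    (F : MultilinearMap K (fun _ : ι => M) K) (v u : ι → M)
    (h : ∀ ν : ℕ, F (v + (ν : K) • u) = 0) : F.linearDeriv v u = 0 := by
  set p : K[X] := ∑ s : Finset ι, monomial #s (F (s.piecewise u v))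
  have heval (c : K) : p.eval c = F (v + c • u) := by
    rw [add_comm, F.map_add_univ, eval_finsetSum]
    refine Finset.sum_congr rfl fun s _ => ?_
    rw [eval_monomial, mul_comm, ← smul_eq_mul, ← prod_const, ← F.map_piecewise_smul]
    congr 1
    ext i
    by_cases hi : i ∈ s <;> simp [hi]
  have hp : p = 0 := eq_zero_of_infinite_isRoot p <|
    Set.infinite_of_injective_forall_mem Nat.cast_injective fun ν => by simp [heval, h]
  have := congrArg (coeff · 1) hp
  simp only [p, finsetSum_coeff, coeff_monomial, coeff_zero] at this
  rw [← this, linearDeriv_apply, ← Finset.sum_filter, ← powerset_univ, ← powersetCard_eq_filter,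
    powersetCard_one, sum_map]
  simp [Finset.piecewise_singleton]

theorem LinearIndependent.exists_alternatingMap_ne_zero {K M ι : Type*} [Field K]
    [AddCommGroup M] [Module K M] [Fintype ι] [DecidableEq ι] {v : ι → M}
    (hv : LinearIndependent K v) : ∃ Ω : M [⋀^ι]→ₗ[K] K, Ω v ≠ 0 := by
  let b := Basis.span hv
  let g := (Submodule.span K (Set.range v)).subtype.leftInverse
  refine ⟨b.det.compLinearMap g, ?_⟩
  have hg (i : ι) : g (v i) = b i := by
    rw [Basis.span_apply]
    exact LinearMap.leftInverse_apply_of_inj (Submodule.ker_subtype _) ⟨v i, _⟩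
  simp [AlternatingMap.compLinearMap_apply, hg, b.det_self]

theorem AlternatingMap.map_snoc_update_castSucc {R M N : Type*} [CommRing R] [AddCommGroup M]
    [Module R M] [AddCommGroup N] [Module R N] {k : ℕ} (Ω : M [⋀^Fin (k + 1)]→ₗ[R] N)
    (w : Fin k → M) (j : Fin k) (x : M) :
    Ω (Fin.snoc (update w j x) (w j)) = -Ω (Fin.snoc w x) := by
  rw [← Ω.map_swap _ (Fin.castSucc_lt_last j).ne, Equiv.comp_swap_eq_update]
  congr 1
  ext i
  refine Fin.lastCases ?_ (fun i => ?_) i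
  · simp [update_of_ne (Fin.castSucc_lt_last j).ne']
  · rcases eq_or_ne i j with rfl | hij
    · simp
    · simp [hij]

theorem AlternatingMap.sum_map_update_snoc_sum_smul {R M N : Type*} [CommRing R] [AddCommGroup M]
    [Module R M] [AddCommGroup N] [Module R N] {k : ℕ} (Ω : M [⋀^Fin (k + 1)]→ₗ[R] N)
    (w : Fin k → M) (a : Fin k → R) (g : Fin (k + 1) → M) :
    ∑ j, Ω (update (Fin.snoc w (∑ i, a i • w i)) j (g j)) =
      Ω (Fin.snoc w (g (Fin.last k) - ∑ i, a i • g i.castSucc)) := by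
  have hΩ (u : Fin k → M) (x : M) : Ω (Fin.snoc u x) = Ω.toMultilinearMap.curryRight u x := rfl
  have hterm (j : Fin k) : Ω (Fin.snoc (update w j (g j.castSucc)) (∑ i, a i • w i)) =
      -(a j • Ω (Fin.snoc w (g j.castSucc))) := by
    rw [hΩ, map_sum, Finset.sum_eq_single j]
    · rw [map_smul, ← hΩ, map_snoc_update_castSucc, smul_neg]
    · intro i _ hij
      rw [map_smul, ← hΩ, Ω.map_eq_zero_of_eq _ (i := i.castSucc) (j := Fin.last k) (by simp [hij])
        (Fin.castSucc_lt_last i).ne, smul_zero]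
    · simp
  rw [Fin.sum_univ_castSucc, hΩ, map_sub, map_sum]
  simp only [← Fin.snoc_update, hterm, Fin.update_snoc_last, Finset.sum_neg_distrib]
  simp only [hΩ, map_smul]
  abel

theorem sub_sum_smul_mem_span_of_forall_not_linearIndependent {K M : Type*} [Field K] [CharZero K]
    [AddCommGroup M] [Module K M] {k : ℕ} (P : Fin (k + 1) → M →+ M)
    (hdep : ∀ x, ¬LinearIndependent K fun i => P i x) {m : M}
    (hm : LinearIndependent K fun i : Fin k => P i.castSucc m) {a : Fin k → K}
    (ha : P (Fin.last k) m = ∑ i, a i • P i.castSucc m) (f : M) :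
    P (Fin.last k) f - ∑ i, a i • P i.castSucc f ∈
      Submodule.span K (Set.range fun i : Fin k => P i.castSucc m) := by
  by_contra hf
  obtain ⟨Ω, hΩ⟩ := (linearIndependent_finSnoc.2 ⟨hm, hf⟩).exists_alternatingMap_ne_zero
  have hv : (fun i => P i m) = Fin.snoc (fun i : Fin k => P i.castSucc m) (P (Fin.last k) m) := by
    ext i; refine Fin.lastCases ?_ (fun i => ?_) i <;> simp
  have hderiv := Ω.toMultilinearMap.linearDeriv_eq_zero_of_map_add_natCast_smul
    (fun i => P i m) (fun i => P i f) fun ν => by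
      refine Ω.map_linearDependent _ ?_
      simpa [Nat.cast_smul_eq_nsmul, Pi.add_def] using hdep (m + ν • f)
  rw [MultilinearMap.linearDeriv_apply, hv, ha] at hderiv
  exact hΩ (by simpa [Ω.sum_map_update_snoc_sum_smul] using hderiv)

section DiffOp

variable {K M : Type*} [Field K] [AddCommGroup M] [Module K M]

/-- `diffOp D x p = ∑ⱼ pⱼ • Dʲ x`: the polynomial `p` read as a differential operator in `D`, with
its coefficients acting on the left. -/
noncomputable def diffOp (D : M →+ M) (x : M) : K[X] →ₗ[K] M :=
  lsum fun j => LinearMap.toSpanSingleton K M (D^[j] x)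

theorem diffOp_monomial (D : M →+ M) (x : M) (j : ℕ) (c : K) :
    diffOp D x (monomial j c) = c • D^[j] x := by
  simp [diffOp, lsum_apply]

theorem diffOp_C (D : M →+ M) (x : M) (c : K) : diffOp D x (C c) = c • x := by
  simpa using diffOp_monomial D x 0 c

theorem diffOp_X_pow (D : M →+ M) (x : M) (j : ℕ) : diffOp (K := K) D x (X ^ j) = D^[j] x := by
  rw [X_pow_eq_monomial, diffOp_monomial, one_smul]

variable {d : K → K} {D : M →+ M} (hD : ∀ (b : K) (x : M), D (b • x) = d b • x + b • D x)
  {t : K} (ht : d t = 1)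
include hD ht

theorem iterate_succ_smul_of_deriv_eq_one (j : ℕ) (x : M) :
    D^[j + 1] (t • x) = t • D^[j + 1] x + (j + 1) • D^[j] x := by
  induction j with
  | zero => simp [hD, ht, add_comm]
  | succ j ih =>
    rw [iterate_succ_apply', ih, map_add, hD, ht, one_smul, map_nsmul, ← iterate_succ_apply' D,
      ← iterate_succ_apply' D, succ_nsmul' _ (j + 1)]
    abel

theorem diffOp_smul_of_deriv_eq_one (x : M) (p : K[X]) :
    diffOp D (t • x) p = t • diffOp D x p + diffOp D x (derivative p) := by
  induction p using Polynomial.induction_on' with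
  | add p q hp hq => simp only [map_add, hp, hq, smul_add]; abel
  | monomial j c =>
    rw [derivative_monomial, diffOp_monomial, diffOp_monomial]
    cases j with
    | zero => simp [smul_comm c t]
    | succ j =>
      rw [iterate_succ_smul_of_deriv_eq_one hD ht, diffOp_monomial, smul_add, smul_comm c t,
        add_tsub_cancel_right, mul_smul, Nat.cast_smul_eq_nsmul]

theorem eq_top_of_forall_diffOp_mem [CharZero K] {W : Submodule K M} {p : K[X]} (hp : p ≠ 0)
    (hW : ∀ x, diffOp D x p ∈ W) : W = ⊤ := by
  have hderiv : ∀ q : K[X], (∀ x, diffOp D x q ∈ W) → ∀ x, diffOp D x (derivative q) ∈ W :=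
    fun q hq x => by
      simpa [diffOp_smul_of_deriv_eq_one hD ht] using W.sub_mem (hq (t • x)) (W.smul_mem t (hq x))
  have hiter (k : ℕ) : ∀ x, diffOp D x (derivative^[k] p) ∈ W := by
    induction k with
    | zero => exact hW
    | succ k ih => simpa only [iterate_succ_apply'] using hderiv _ ih
  set c := (derivative^[p.natDegree] p).coeff 0
  have hC : derivative^[p.natDegree] p = C c :=
    eq_C_of_natDegree_eq_zero (by simpa using natDegree_iterate_derivative p p.natDegree)
  have hc : c ≠ 0 := by
    simp [c, coeff_iterate_derivative, Nat.descFactorial_self, hp, Nat.factorial_ne_zero]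
  refine eq_top_iff.2 fun x _ => ?_
  simpa [hC, diffOp_C, hc] using W.smul_mem c⁻¹ (hiter p.natDegree x)

theorem exists_linearIndependent_iterate_of_deriv_eq_one [CharZero K] [FiniteDimensional K M] :
    ∃ m : M, LinearIndependent K fun i : Fin (finrank K M) => D^[i] m := by
  suffices ∀ k ≤ finrank K M, ∃ m : M, LinearIndependent K fun i : Fin k => D^[i] m from
    this _ le_rfl
  intro k
  induction k with
  | zero => exact fun _ => ⟨0, linearIndependent_empty_type⟩
  | succ k ih =>
    intro hk
    obtain ⟨m, hm⟩ := ih (by omega)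
    by_contra! hdep
    set W := Submodule.span K (Set.range fun i : Fin k => D^[i] m)
    have hsnoc : (fun i : Fin (k + 1) => D^[i] m) =
        Fin.snoc (fun i : Fin k => D^[i] m) (D^[k] m) := by
      ext i; refine Fin.lastCases ?_ (fun i => ?_) i <;> simp
    have hmem : D^[k] m ∈ W := by
      by_contra h
      exact hdep m (hsnoc ▸ linearIndependent_finSnoc.2 ⟨hm, h⟩)
    obtain ⟨a, ha⟩ := (Submodule.mem_span_range_iff_exists_fun K).1 hmem
    have hW : ∀ f, diffOp D f (X ^ k - ∑ i : Fin k, C (a i) * X ^ (i : ℕ)) ∈ W := fun f => by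
      -- `⇑(E ^ i) = D^[i]` holds by `rfl`
      let E : AddMonoid.End M := D
      rw [map_sub, map_sum, diffOp_X_pow]
      simp only [C_mul_X_pow_eq_monomial, diffOp_monomial]
      exact sub_sum_smul_mem_span_of_forall_not_linearIndependent (fun i => E ^ (i : ℕ)) hdep hm
        ha.symm f
    have htop :=
      eq_top_of_forall_diffOp_mem hD ht (monic_X_pow_sub (degree_sum_fin_lt a)).ne_zero hW
    have hWk : finrank K W = k := by simpa using finrank_span_eq_card hm
    rw [htop, finrank_top] at hWk
    omega

end DiffOp

section Rescale

variable {K M : Type*} [Field K] [AddCommGroup M] [Module K M] {d : K → K} {D : M →+ M}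
  (hD : ∀ (b : K) (x : M), D (b • x) = d b • x + b • D x)
include hD

theorem map_mem_span_iterate_succ (m : M) {k : ℕ} {x : M}
    (hx : x ∈ Submodule.span K (Set.range fun i : Fin k => D^[i] m)) :
    D x ∈ Submodule.span K (Set.range fun i : Fin (k + 1) => D^[i] m) := by
  have hle : Submodule.span K (Set.range fun i : Fin k => D^[i] m) ≤
      Submodule.span K (Set.range fun i : Fin (k + 1) => D^[i] m) :=
    Submodule.span_mono <| Set.range_subset_iff.2 fun i => ⟨i.castSucc, rfl⟩
  induction hx using Submodule.span_induction with
  | mem y hy =>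
    obtain ⟨i, rfl⟩ := hy
    exact Submodule.subset_span ⟨i.succ, iterate_succ_apply' D i m⟩
  | zero => simp
  | add y z _ _ hy hz => simpa using add_mem hy hz
  | smul b y hy ih =>
    rw [hD]
    exact add_mem (Submodule.smul_mem _ _ (hle hy)) (Submodule.smul_mem _ _ ih)

theorem smul_iterate_mem_span_iterate (c : K) (m : M) (j : ℕ) :
    (c • D)^[j] m ∈ Submodule.span K (Set.range fun i : Fin (j + 1) => D^[i] m) := by
  induction j with
  | zero => exact Submodule.subset_span ⟨0, rfl⟩
  | succ j ih =>
    rw [iterate_succ_apply', AddMonoidHom.smul_apply]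
    exact Submodule.smul_mem _ _ (map_mem_span_iterate_succ hD m ih)

theorem span_smul_iterate_le (c : K) (m : M) (k : ℕ) :
    Submodule.span K (Set.range fun i : Fin k => (c • D)^[i] m) ≤
      Submodule.span K (Set.range fun i : Fin k => D^[i] m) := by
  refine Submodule.span_le.2 <| Set.range_subset_iff.2 fun i => ?_
  refine Submodule.span_mono ?_ (smul_iterate_mem_span_iterate hD c m i)
  exact Set.range_subset_iff.2 fun j => ⟨Fin.castLE i.isLt j, rfl⟩

theorem exists_linearIndependent_iterate [CharZero K] [FiniteDimensional K M]
    (hd : ∃ t, d t ≠ 0) : ∃ m : M, LinearIndependent K fun i : Fin (finrank K M) => D^[i] m := by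
  obtain ⟨t, ht⟩ := hd
  have hD' (b : K) (x : M) :
      ((d t)⁻¹ • D) (b • x) = ((d t)⁻¹ * d b) • x + b • ((d t)⁻¹ • D) x := by
    simp only [AddMonoidHom.smul_apply, hD, smul_add, smul_smul, mul_comm b]
  obtain ⟨m, hm⟩ := exists_linearIndependent_iterate_of_deriv_eq_one hD' (inv_mul_cancel₀ ht)
  refine ⟨m, linearIndependent_of_top_le_span_of_card_eq_finrank ?_ (Fintype.card_fin _)⟩
  rw [← hm.span_eq_top_of_card_eq_finrank' (Fintype.card_fin _)]
  exact span_smul_iterate_le hD _ m _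

end Rescale

theorem stmt10_general (B M : Type) [Field B] [CharZero B] [AddCommGroup M] [Module B M]
    (d : B → B)
    (hd_ne : ∃ b, d b ≠ 0)
    (n : ℕ) (e : Module.Basis (Fin n) B M)
    (nab : M → M) (hadd : ∀ x y, nab (x + y) = nab x + nab y)
    (hL : ∀ (b : B) (m : M), nab (b • m) = d b • m + b • nab m) :
    ∃ (m : M) (b : Module.Basis (Fin n) B M), ∀ i : Fin n, b i = nab^[(i : ℕ)] m := by
  have : FiniteDimensional B M := .of_basis e
  obtain rfl : finrank B M = n := by simp [finrank_eq_card_basis e]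
  obtain ⟨m, hm⟩ := exists_linearIndependent_iterate (D := AddMonoidHom.mk' nab hadd) hL hd_ne
  exact ⟨m, basisOfLinearIndependentOfCardEqFinrank' _ hm (Fintype.card_fin _), fun i => by simp⟩

/-- Deligne's theorem: over a field of characteristic 0 with a nontrivial derivation,
every finite-rank differential module admits a cyclic vector. -/
theorem stmt10 (B M : Type) [Field B] [CharZero B] [AddCommGroup M] [Module B M]
    (d : B → B)
    (hd_add : ∀ x y, d (x + y) = d x + d y)
    (hd_mul : ∀ x y, d (x * y) = x * d y + d x * y)
    (hd_ne : ∃ b, d b ≠ 0)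
    (n : ℕ) (e : Module.Basis (Fin n) B M)
    (nab : M → M) (hadd : ∀ x y, nab (x + y) = nab x + nab y)
    (hL : ∀ (b : B) (m : M), nab (b • m) = d b • m + b • nab m) :
    ∃ (m : M) (b : Module.Basis (Fin n) B M), ∀ i : Fin n, b i = nab^[(i : ℕ)] m :=
  stmt10_general B M d hd_ne n e nab hadd hL
end

section
/- Let B be a commutative ring, P(X) = Σ_{s=0}^{N} r_s X^s ∈ B[X] with r_0 = 1, k ⊆ B a field with more than N elements, t ∈ B, and a_0, ..., a_N distinct elements of k ∩ B^{d=0}. Then the ideal of B generated by the values P(t − a_0), ..., P(t − a_N) is the unit ideal. -/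
/-!
The values `P(t - a_i)` are the entries of `V *ᵥ r`, where `V` is the Vandermonde matrix of the
points `t - a_i`. Its determinant is a product of differences `a_j - a_i`, which are units of `k`
and hence of `B`, so `V` is invertible over `B` and the values generate the same ideal as the
coefficients `r_s`; that ideal contains `r_0 = 1`.
-/

open Matrix

theorem Ideal.span_range_mulVec_le {R m n : Type*} [CommSemiring R] [Fintype n]
    (M : Matrix m n R) (v : n → R) :
    Ideal.span (Set.range (M *ᵥ v)) ≤ Ideal.span (Set.range v) := by
  rw [Ideal.span_le]
  rintro _ ⟨i, rfl⟩
  exact Ideal.sum_mem _ fun j _ => Ideal.mul_mem_left _ _ (Ideal.subset_span ⟨j, rfl⟩)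

theorem Ideal.span_range_mulVec_of_isUnit_det {R n : Type*} [CommRing R] [Fintype n]
    [DecidableEq n] {M : Matrix n n R} (hM : IsUnit M.det) (v : n → R) :
    Ideal.span (Set.range (M *ᵥ v)) = Ideal.span (Set.range v) := by
  refine le_antisymm (Ideal.span_range_mulVec_le M v) ?_
  calc Ideal.span (Set.range v) = Ideal.span (Set.range (M⁻¹ *ᵥ (M *ᵥ v))) := by
        rw [mulVec_mulVec, nonsing_inv_mul M hM, one_mulVec]
    _ ≤ Ideal.span (Set.range (M *ᵥ v)) := Ideal.span_range_mulVec_le _ _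

theorem Matrix.isUnit_det_vandermonde {R : Type*} [CommRing R] {n : ℕ} {x : Fin n → R}
    (hx : Pairwise fun i j => IsUnit (x i - x j)) : IsUnit (vandermonde x).det := by
  rw [det_vandermonde]
  exact IsUnit.prod_iff.mpr fun i _ => IsUnit.prod_iff.mpr fun j hj => hx (Finset.mem_Ioi.mp hj).ne'

theorem Matrix.vandermonde_mulVec {R : Type*} [CommRing R] {n : ℕ} (x r : Fin n → R) :
    vandermonde x *ᵥ r = fun i => ∑ s, r s * x i ^ (s : ℕ) := by
  ext i
  simp only [mulVec, dotProduct, vandermonde_apply, mul_comm]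

theorem stmt12_general (B k : Type) [CommRing B] [Field k] (φ : k →+* B)
    (N : ℕ) (r : Fin (N + 1) → B) (hr0 : r 0 = 1)
    (a : Fin (N + 1) → k) (ha : Function.Injective a) (t : B) :
    Ideal.span (Set.range fun i : Fin (N + 1) =>
        ∑ s : Fin (N + 1), r s * (t - φ (a i)) ^ (s : ℕ)) = ⊤ := by
  have hunit : Pairwise fun i j => IsUnit ((t - φ (a i)) - (t - φ (a j))) := fun i j hij => by
    dsimp only
    rw [sub_sub_sub_cancel_left, ← map_sub]
    exact (sub_ne_zero.mpr (ha.ne hij.symm)).isUnit.map φ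
  rw [← vandermonde_mulVec, Ideal.span_range_mulVec_of_isUnit_det (isUnit_det_vandermonde hunit),
    Ideal.eq_top_iff_one, ← hr0]
  exact Ideal.subset_span ⟨0, rfl⟩

/-- If `P(X) = Σ_{s≤N} r_s X^s` with `r_0 = 1` and `a_0, …, a_N` are distinct constants
in a field `k` contained in `B`, then the values `P(t − a_i)` generate the unit ideal. -/
theorem stmt12 (B k : Type) [CommRing B] [Field k] (φ : k →+* B)
    (d : B → B) (hconst : ∀ x, d (φ x) = 0)
    (N : ℕ) (r : Fin (N + 1) → B) (hr0 : r 0 = 1)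
    (a : Fin (N + 1) → k) (ha : Function.Injective a) (t : B) :
    Ideal.span (Set.range fun i : Fin (N + 1) =>
        ∑ s : Fin (N + 1), r s * (t - φ (a i)) ^ (s : ℕ)) = ⊤ :=
  stmt12_general B k φ N r hr0 a ha t
end
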